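/- Let A be a bounded operator on the model space K_Θ for an inner function Θ. Then S_Θ* A S_Θ = A if and only if A = 0. -/

import Mathlib

noncomputable section

open Complex Filter Topology ContinuousLinearMap
open scoped ENNReal

/-- The Hardy space `H²`, modeled as the space of square-summable Taylor coefficient
sequences. -/
abbrev H2 : Type := lp (fun _ : ℕ => ℂ) 2

/-- The shifted coefficient sequence, i.e. the Taylor coefficients of `z • f`. -/
def shiftFun (f : ∀ _ : ℕ, ℂ) : ∀ _ : ℕ, ℂ
  | 0 => 0
  | n + 1 => f n

lemma shiftFun_memℓp (f : H2) : Memℓp (shiftFun f) 2 := by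
  apply memℓp_gen
  have hf : Summable fun n => ‖(f : ∀ _ : ℕ, ℂ) n‖ ^ (2 : ℝ≥0∞).toReal :=
    Memℓp.summable (by norm_num) (lp.memℓp f)
  refine (summable_nat_add_iff 1).1 ?_
  simpa [shiftFun] using hf

lemma shiftFun_tsum (f : H2) :
    (∑' n, ‖shiftFun f n‖ ^ (2 : ℝ≥0∞).toReal)
      = ∑' n, ‖(f : ∀ _ : ℕ, ℂ) n‖ ^ (2 : ℝ≥0∞).toReal := by
  rw [Summable.tsum_eq_zero_add ((shiftFun_memℓp f).summable (by norm_num))]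
  simp [shiftFun]

/-- The unilateral shift `S f = z • f` on `H²`. -/
def shift : H2 →L[ℂ] H2 := by
  refine LinearMap.mkContinuous
    { toFun := fun f => ⟨shiftFun f, shiftFun_memℓp f⟩
      map_add' := ?_
      map_smul' := ?_ } 1 ?_
  · intro f g; ext n
    change shiftFun (↑(f + g)) n = shiftFun f n + shiftFun g n
    cases n <;> simp [shiftFun]
  · intro c f; ext n; cases n <;> simp [shiftFun]
  · intro f
    rw [one_mul]
    apply le_of_eq
    rw [lp.norm_eq_tsum_rpow (by norm_num) , lp.norm_eq_tsum_rpow (by norm_num) f]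
    congr 1
    exact shiftFun_tsum f

/-- An inner function `Θ`, encoded by the multiplication operator `f ↦ Θ f` on `H²`:
an operator commutes with the shift iff it is multiplication by a bounded analytic
function `Θ`, and this multiplication is isometric on `H²` iff `Θ` is inner. -/
structure InnerFunction where
  /-- The multiplication operator `f ↦ Θ f` on `H²`. -/
  mul : H2 →L[ℂ] H2
  /-- Multiplication by `Θ` commutes with the shift (i.e. `Θ ∈ H^∞`). -/
  comm : mul ∘L shift = shift ∘L mul
  /-- `Θ` has unimodular boundary values a.e., i.e. multiplication by `Θ` is isometric. -/
  isom : ∀ f : H2, ‖mul f‖ = ‖f‖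

/-- The subspace `Θ H²` of `H²`. -/
def thetaH2 (Θ : InnerFunction) : Submodule ℂ H2 := LinearMap.range (Θ.mul : H2 →ₗ[ℂ] H2)

/-- The model space `K_Θ = H² ⊖ Θ H²`. -/
def Ksp (Θ : InnerFunction) : Submodule ℂ H2 := (thetaH2 Θ)ᗮ

instance (Θ : InnerFunction) : CompleteSpace (Ksp Θ) :=
  (Submodule.isClosed_orthogonal _).completeSpace_coe

/-- The orthogonal projection `P_Θ` of `H²` onto the model space `K_Θ`. -/
def projK (Θ : InnerFunction) : H2 →L[ℂ] Ksp Θ := (Ksp Θ).orthogonalProjectionOnto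

/-- The compressed shift `S_Θ = P_Θ S |_{K_Θ}` on the model space. -/
def Sc (Θ : InnerFunction) : Ksp Θ →L[ℂ] Ksp Θ :=
  projK Θ ∘L (shift ∘L (Ksp Θ).subtypeL)

/-- The constant function `1 ∈ H²`. -/
def one' : H2 := lp.single 2 0 1

/-- Evaluation of (the analytic extension of) `f ∈ H²` at a point `λ` of the disk:
`f(λ) = ∑ aₙ λⁿ`. -/
def evalAt (f : H2) (l : ℂ) : ℂ := ∑' n : ℕ, (f : ∀ _ : ℕ, ℂ) n * l ^ n

/-- The value `Θ(λ)` of the inner function at a point of the disk. -/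
def IFval (Θ : InnerFunction) (l : ℂ) : ℂ := evalAt (Θ.mul one') l

/-- The Szegő (Cauchy) kernel `c_λ(z) = 1/(1 - conj(λ) z)`, with Taylor coefficients
`conj(λ)ⁿ`, as an element of `H²`. -/
def szego (l : ℂ) : H2 := ∑' n : ℕ, (starRingEnd ℂ l) ^ n • lp.single 2 n 1

/-- The reproducing kernel `k_λ = P_Θ c_λ` of `K_Θ`,
`k_λ(z) = (1 - conj(Θ(λ)) Θ(z))/(1 - conj(λ) z)`. -/
def kern (Θ : InnerFunction) (l : ℂ) : Ksp Θ := projK Θ (szego l)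

/-- The reproducing kernel of `K_Θ` at `0`, `k₀(z) = 1 - conj(Θ(0)) Θ(z)`. -/
def kern0 (Θ : InnerFunction) : Ksp Θ := projK Θ one'

/-- The conjugate kernel `k̃_λ(z) = (Θ(z) - Θ(λ))/(z - λ)`, an element of `K_Θ`.
In terms of the backward shift, `k̃_λ = ∑_j λ^j S*^(j+1) Θ`, which lies in `K_Θ`
(so applying `P_Θ` does not change it). -/
def ckern (Θ : InnerFunction) (l : ℂ) : Ksp Θ :=
  projK Θ (∑' j : ℕ, l ^ j • ((ContinuousLinearMap.adjoint shift) ^ (j + 1)) (Θ.mul one'))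

/-- The rank-one operator `(u ⊗ v) f = ⟨f, v⟩ u` (inner product linear in `f`). -/
def rankOne {E : Type*} [NormedAddCommGroup E] [InnerProductSpace ℂ E]
    (u v : E) : E →L[ℂ] E := (innerSL ℂ v).smulRight u

/-!
On `K_Θ` the compressed shift is strongly stable: `S_Θⁿ x = P_Θ Sⁿ x → 0`. On monomials this is
`‖P_Θ zᵐ‖² = 1 - ‖Θ* zᵐ‖² = 1 - ∑_{j ≤ m} |Θ̂(j)|² → 1 - ‖Θ‖² = 0`, and since the `P_Θ Sⁿ` are
contractions it spreads to all of `H²`. For a strongly stable `T`, the identity `T* A T = A`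
gives `⟪A x, y⟫ = ⟪A (Tⁿ x), Tⁿ y⟫ → 0`.
-/

section StronglyStable

variable {𝕜 E : Type*} [RCLike 𝕜] [NormedAddCommGroup E] [InnerProductSpace 𝕜 E] [CompleteSpace E]

lemma inner_apply_pow_of_adjoint_comp_comp_eq {T A : E →L[𝕜] E} (h : adjoint T ∘L A ∘L T = A)
    (n : ℕ) (x y : E) : inner 𝕜 (A ((T ^ n) x)) ((T ^ n) y) = inner 𝕜 (A x) y := by
  induction n generalizing x y with
  | zero => simp
  | succ n ih =>
    change inner 𝕜 (A ((T ^ n) (T x))) ((T ^ n) (T y)) = _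
    rw [ih, ← adjoint_inner_left]
    exact congrArg (inner 𝕜 · y) (DFunLike.congr_fun h x)

theorem adjoint_comp_comp_eq_self_iff_eq_zero {T A : E →L[𝕜] E}
    (hT : ∀ x, Tendsto (fun n => (T ^ n) x) atTop (𝓝 0)) :
    adjoint T ∘L A ∘L T = A ↔ A = 0 := by
  refine ⟨fun h => ?_, fun h => by simp [h]⟩
  ext x
  have hlim : Tendsto (fun n => inner 𝕜 (A ((T ^ n) x)) ((T ^ n) (A x))) atTop (𝓝 0) := by
    simpa using ((A.continuous.tendsto 0).comp (hT x)).inner (𝕜 := 𝕜) (hT (A x))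
  simp only [inner_apply_pow_of_adjoint_comp_comp_eq h] at hlim
  exact (inner_self_eq_zero (𝕜 := 𝕜)).mp (tendsto_nhds_unique tendsto_const_nhds hlim)

end StronglyStable

lemma norm_shift (f : H2) : ‖shift f‖ = ‖f‖ := by
  rw [lp.norm_eq_tsum_rpow (by norm_num), lp.norm_eq_tsum_rpow (by norm_num) f]
  exact congrArg (· ^ _) (shiftFun_tsum f)

lemma norm_shift_pow (n : ℕ) (f : H2) : ‖(shift ^ n) f‖ = ‖f‖ := by
  induction n with
  | zero => simp
  | succ n ih => rw [pow_succ']; exact (norm_shift _).trans ih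

lemma shift_single (k : ℕ) (c : ℂ) : shift (lp.single 2 k c) = lp.single 2 (k + 1) c := by
  ext (_ | n)
  · simp [shift, shiftFun]
  · simp [shift, shiftFun, lp.single_apply, Pi.single_apply]

lemma shift_pow_single (n k : ℕ) (c : ℂ) :
    (shift ^ n) (lp.single 2 k c) = lp.single 2 (n + k) c := by
  induction n with
  | zero => simp
  | succ n ih =>
    rw [pow_succ']
    change shift ((shift ^ n) _) = _
    rw [ih, shift_single, Nat.succ_add]

lemma shift_pow_apply (n : ℕ) (f : H2) (j : ℕ) :
    (shift ^ n) f j = if n ≤ j then f (j - n) else 0 := by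
  induction n generalizing j with
  | zero => simp
  | succ n ih =>
    rw [pow_succ']
    change shiftFun ((shift ^ n) f) j = _
    cases j with
    | zero => simp [shiftFun]
    | succ j => exact (ih j).trans (by simp)

lemma hasSum_norm_sq (f : H2) : HasSum (fun n => ‖f n‖ ^ 2) (‖f‖ ^ 2) := by
  have h := lp.hasSum_norm (p := 2) (by norm_num) f
  rw [show (2 : ℝ≥0∞).toReal = ((2 : ℕ) : ℝ) by norm_num] at h
  simpa only [Real.rpow_natCast] using h

namespace InnerFunction

open ComplexConjugate

variable (Θ : InnerFunction)

lemma inner_mul_mul (f g : H2) : inner ℂ (Θ.mul f) (Θ.mul g) = inner ℂ f g :=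
  (⟨Θ.mul, Θ.isom⟩ : H2 →ₗᵢ[ℂ] H2).inner_map_map f g

lemma mul_shift_pow (n : ℕ) (f : H2) : Θ.mul ((shift ^ n) f) = (shift ^ n) (Θ.mul f) :=
  DFunLike.congr_fun ((Commute.pow_right Θ.comm n).eq) f

lemma mul_single (k : ℕ) : Θ.mul (lp.single 2 k 1) = (shift ^ k) (Θ.mul one') := by
  rw [← mul_shift_pow, one', shift_pow_single, add_zero]

lemma mul_mem_orthogonal_Ksp (g : H2) : Θ.mul g ∈ (Ksp Θ)ᗮ :=
  Submodule.le_orthogonal_orthogonal _ ⟨g, rfl⟩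

lemma coe_projK (x : H2) : (projK Θ x : H2) = x - Θ.mul (adjoint Θ.mul x) := by
  refine Submodule.eq_starProjection_of_mem_orthogonal' ?_ (Θ.mul_mem_orthogonal_Ksp _)
    (sub_add_cancel _ _).symm
  rintro _ ⟨g, rfl⟩
  change inner ℂ (Θ.mul g) _ = 0
  rw [inner_sub_right, ← adjoint_inner_right, inner_mul_mul, adjoint_inner_right, sub_self]

lemma projK_mul (g : H2) : projK Θ (Θ.mul g) = 0 :=
  Submodule.orthogonalProjectionOnto_apply_of_mem_orthogonal (Θ.mul_mem_orthogonal_Ksp g)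

lemma norm_projK_sq (x : H2) :
    ‖(projK Θ x : H2)‖ ^ 2 = ‖x‖ ^ 2 - ‖adjoint Θ.mul x‖ ^ 2 := by
  have hre : RCLike.re (inner ℂ x (Θ.mul (adjoint Θ.mul x))) = ‖adjoint Θ.mul x‖ ^ 2 := by
    rw [← adjoint_inner_left, inner_self_eq_norm_sq]
  rw [coe_projK, norm_sub_sq (𝕜 := ℂ), hre, Θ.isom]
  ring

lemma adjoint_mul_single_apply (m k : ℕ) :
    adjoint Θ.mul (lp.single 2 m 1) k = if k ≤ m then conj (Θ.mul one' (m - k)) else 0 := by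
  have hcoeff : adjoint Θ.mul (lp.single 2 m 1) k
      = inner ℂ (lp.single 2 k 1) (adjoint Θ.mul (lp.single 2 m 1)) := by
    simp [lp.inner_single_left]
  rw [hcoeff, adjoint_inner_right, mul_single, lp.inner_single_right, shift_pow_apply]
  split_ifs <;> simp

lemma norm_adjoint_mul_single_sq (m : ℕ) :
    ‖adjoint Θ.mul (lp.single 2 m 1)‖ ^ 2 = ∑ j ∈ Finset.range (m + 1), ‖Θ.mul one' j‖ ^ 2 := by
  calc ‖adjoint Θ.mul (lp.single 2 m 1)‖ ^ 2
      = ∑ k ∈ Finset.range (m + 1), ‖adjoint Θ.mul (lp.single 2 m 1) k‖ ^ 2 := by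
        refine (hasSum_norm_sq _).unique (hasSum_sum_of_ne_finset_zero fun k hk => ?_)
        rw [Finset.mem_range, Nat.lt_succ_iff] at hk
        simp [adjoint_mul_single_apply, hk]
    _ = ∑ k ∈ Finset.range (m + 1), ‖Θ.mul one' (m + 1 - 1 - k)‖ ^ 2 := by
        refine Finset.sum_congr rfl fun k hk => ?_
        rw [Finset.mem_range, Nat.lt_succ_iff] at hk
        simp [adjoint_mul_single_apply, hk]
    _ = ∑ j ∈ Finset.range (m + 1), ‖Θ.mul one' j‖ ^ 2 :=
        Finset.sum_range_reflect (fun j => ‖Θ.mul one' j‖ ^ 2) (m + 1)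

lemma norm_mul_one : ‖Θ.mul one'‖ = 1 := by
  rw [Θ.isom, one', lp.norm_single (by norm_num), norm_one]

lemma tendsto_projK_single : Tendsto (fun m => projK Θ (lp.single 2 m 1)) atTop (𝓝 0) := by
  have hpartial := (hasSum_norm_sq (Θ.mul one')).tendsto_sum_nat.comp (tendsto_add_atTop_nat 1)
  have hsq : Tendsto (fun m => ‖(projK Θ (lp.single 2 m 1) : H2)‖ ^ 2) atTop (𝓝 0) := by
    simp only [norm_projK_sq, norm_adjoint_mul_single_sq,
      lp.norm_single (by norm_num : (0 : ℝ≥0∞) < 2), norm_one]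
    simpa [norm_mul_one] using (tendsto_const_nhds (x := (1 : ℝ))).sub hpartial
  rw [tendsto_zero_iff_norm_tendsto_zero]
  simpa [Real.sqrt_sq] using hsq.sqrt

lemma tendsto_projK_shift_pow (x : H2) :
    Tendsto (fun n => projK Θ ((shift ^ n) x)) atTop (𝓝 0) := by
  let V : Submodule ℂ H2 :=
    { carrier := {x | Tendsto (fun n => projK Θ ((shift ^ n) x)) atTop (𝓝 0)}
      add_mem' := fun hx hy => by
        simpa only [Set.mem_ofPred_eq, map_add, add_zero] using hx.add hy
      zero_mem' := by simpa only [Set.mem_ofPred_eq, map_zero] using tendsto_const_nhds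
      smul_mem' := fun c x hx => by
        simpa only [Set.mem_ofPred_eq, map_smul, smul_zero] using hx.const_smul c }
  have hV_closed : IsClosed (V : Set H2) := by
    have hbound : ∀ n y, ‖(projK Θ ∘L shift ^ n) y‖ ≤ 1 * ‖y‖ := fun n y => by
      rw [one_mul, ← norm_shift_pow n y]
      exact Submodule.norm_orthogonalProjectionOnto_apply_le _ _
    have hequi : UniformEquicontinuous fun n => ⇑(projK Θ ∘L shift ^ n) :=
      LipschitzWith.uniformEquicontinuous _ _ fun n =>
        AddMonoidHomClass.lipschitz_of_bound _ 1 (hbound n)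
    exact hequi.equicontinuous.isClosed_setOfPred_tendsto continuous_const
  have hV_single : ∀ k c, lp.single 2 k c ∈ V := fun k c => by
    have h := ((tendsto_projK_single Θ).comp (tendsto_add_atTop_nat k)).const_smul c
    change Tendsto _ _ _
    simpa only [Function.comp_apply, shift_pow_single, smul_zero, ← map_smul, ← lp.single_smul,
      smul_eq_mul, mul_one] using h
  exact hV_closed.mem_of_tendsto (lp.hasSum_single (by norm_num) x).tendsto_sum_nat
    (Eventually.of_forall fun K => V.sum_mem fun k _ => hV_single k _)

lemma projK_shift_projK (y : H2) : projK Θ (shift (projK Θ y)) = projK Θ (shift y) := by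
  have h := Θ.mul_shift_pow 1 (adjoint Θ.mul y)
  rw [pow_one] at h
  rw [coe_projK, map_sub, map_sub, ← h, projK_mul, sub_zero]

lemma Sc_pow_apply (n : ℕ) (x : Ksp Θ) : (Sc Θ ^ n) x = projK Θ ((shift ^ n) x) := by
  induction n with
  | zero => exact (Submodule.orthogonalProjectionOnto_mem_subspace_eq_self x).symm
  | succ n ih =>
    rw [pow_succ']
    change projK Θ (shift ((Sc Θ ^ n) x)) = _
    rw [ih, projK_shift_projK, pow_succ']
    rfl

end InnerFunction

/-- `S_Θ* A S_Θ = A` if and only if `A = 0`. -/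
theorem toeplitz_identity_iff_zero (Θ : InnerFunction) (A : Ksp Θ →L[ℂ] Ksp Θ) :
    ContinuousLinearMap.adjoint (Sc Θ) ∘L A ∘L Sc Θ = A ↔ A = 0 :=
  adjoint_comp_comp_eq_self_iff_eq_zero fun x => by
    simpa only [InnerFunction.Sc_pow_apply] using Θ.tendsto_projK_shift_pow x
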